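/- If P = Σ_{k≥0} p_k Λ^{-k} with p_0 = 1 is a dressing operator satisfying L = P Λ P^{-1}, then the operator M = ε P_x P^{-1} satisfies [M, L^m] = ε ∂_x(L^m) for every m ≥ 1, where ∂_x(L^m) denotes the operator obtained by differentiating the coefficients of L^m in x. -/

import Mathlib

/-! Writing `L^m = P Λ^m P⁻¹` and differentiating, the Leibniz rule together with
`∂(P⁻¹) = -P⁻¹ (∂P) P⁻¹` gives `∂(P X P⁻¹) = [∂P · P⁻¹, P X P⁻¹] + P (∂X) P⁻¹`.
Since `∂(Λ^m) = 0`, this says `∂(L^m) = [∂P · P⁻¹, L^m]`, and multiplying by the central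
`ε` gives the claim. -/

namespace LeibnizMap

variable {R : Type*} [Ring R] {d : R →+ R} (hd : ∀ a b : R, d (a * b) = d a * b + a * d b)
include hd

theorem map_one_eq_zero : d 1 = 0 := by
  simpa using hd 1 1

theorem map_pow_eq_zero {x : R} (hx : d x = 0) (k : ℕ) : d (x ^ k) = 0 := by
  induction k with
  | zero => rw [pow_zero, map_one_eq_zero hd]
  | succ k ih => rw [pow_succ, hd, ih, hx, zero_mul, mul_zero, add_zero]

theorem map_units_inv (P : Rˣ) : d ↑P⁻¹ = -(↑P⁻¹ * d P * ↑P⁻¹) := by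
  have hsum : d P * ↑P⁻¹ + P * d ↑P⁻¹ = 0 := by
    rw [← hd, Units.mul_inv, map_one_eq_zero hd]
  calc d ↑P⁻¹ = ↑P⁻¹ * (P * d ↑P⁻¹) := (Units.inv_mul_cancel_left P _).symm
    _ = -(↑P⁻¹ * d P * ↑P⁻¹) := by rw [eq_neg_of_add_eq_zero_right hsum]; noncomm_ring

theorem map_units_conj (P : Rˣ) (X : R) :
    d (P * X * ↑P⁻¹) = d P * ↑P⁻¹ * (P * X * ↑P⁻¹) - (P * X * ↑P⁻¹) * (d P * ↑P⁻¹)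
      + P * d X * ↑P⁻¹ := by
  rw [hd, hd, map_units_inv hd]
  simp only [mul_assoc, Units.inv_mul_cancel_left]
  noncomm_ring

end LeibnizMap

theorem units_conj_pow_of_semiconjBy {R : Type*} [Monoid R] {P : Rˣ} {Λ L : R}
    (h : SemiconjBy (P : R) Λ L) (m : ℕ) : L ^ m = P * Λ ^ m * ↑P⁻¹ :=
  (Units.eq_mul_inv_iff_mul_eq P).mpr (h.pow_right m).symm

/-- If `P` is an invertible dressing operator with `P Λ = L P` (i.e. `L = P Λ P⁻¹`), `∂`
is a derivation of the operator ring with `∂Λ = 0`, and `ε` is central, then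
`M = ε ∂P · P⁻¹` satisfies `[M, L^m] = ε ∂(L^m)` for every `m ≥ 1`. -/
theorem dressing_commutator_eq_deriv
    (R : Type*) [Ring R] (d : R →+ R)
    (hd : ∀ a b : R, d (a * b) = d a * b + a * d b)
    (ε Λ L : R) (hε : ∀ r : R, ε * r = r * ε)
    (P : Rˣ) (hΛ : d Λ = 0) (hPL : (P : R) * Λ = L * (P : R)) :
    ∀ m : ℕ, 1 ≤ m →
      (ε * d (P : R) * ((P⁻¹ : Rˣ) : R)) * L ^ m
        - L ^ m * (ε * d (P : R) * ((P⁻¹ : Rˣ) : R))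
      = ε * d (L ^ m) := by
  intro m _
  rw [units_conj_pow_of_semiconjBy hPL m, LeibnizMap.map_units_conj hd,
    LeibnizMap.map_pow_eq_zero hd hΛ, mul_zero, zero_mul, add_zero, mul_sub,
    ← mul_assoc ε (P * Λ ^ m * ↑P⁻¹), hε (P * Λ ^ m * ↑P⁻¹)]
  noncomm_ring
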